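/- Let f_1,...,f_T : Z → ℝ be convex functions on a convex set Z ⊆ ℝ^m, α_1,...,α_T > 0 weights, and suppose each f_t and each optimistic hint ψ_t is λ-strongly convex w.r.t. a norm ‖·‖. Let z_t = argmin_{z∈Z} [Σ_{j<t} α_j f_j(z) + α_t ψ_t(z)] (Optimistic FTL) and z̃_{t+1} = argmin_{z∈Z} Σ_{j≤t} α_j f_j(z). Then for all z ∈ Z: Σ_t α_t f_t(z_t) - Σ_t α_t f_t(z) ≤ Σ_t [α_t(f_t(z_t) - f_t(z̃_{t+1})) - α_t(ψ_t(z_t) - ψ_t(z̃_{t+1}))] - ½ λ Σ_t α_t ‖z_t - z̃_{t+1}‖². -/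

import Mathlib

open Finset

lemma strong_growth {E : Type*} [NormedAddCommGroup E] [NormedSpace ℝ E]
    {Z : Set E} {μ : ℝ} (hμ : 0 ≤ μ) {g : E → ℝ}
    (hg : StrongConvexOn Z μ g) {x y : E} (hx : x ∈ Z) (hy : y ∈ Z)
    (hmin : IsMinOn g Z x) : g x + μ / 2 * ‖y - x‖ ^ 2 ≤ g y := by
  set c := μ / 2 * ‖y - x‖ ^ 2 with hc
  have hkey : ∀ a : ℝ, a ∈ Set.Ioo (0:ℝ) 1 → g x + (1 - a) * c ≤ g y := by
    intro a ha
    have hb : (0:ℝ) ≤ 1 - a := by linarith [ha.2]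
    have hmem : a • y + (1 - a) • x ∈ Z := hg.1 hy hx ha.1.le hb (by ring)
    have h1 : g x ≤ g (a • y + (1 - a) • x) := hmin hmem
    have h2 := hg.2 hy hx ha.1.le hb (by ring)
    simp only [smul_eq_mul] at h2
    have h3 : g x ≤ a * g y + (1 - a) * g x - a * (1 - a) * c := by
      refine h1.trans (h2.trans (le_of_eq ?_))
      rw [hc]
    nlinarith [ha.1]
  have hcont : Continuous fun a : ℝ => g x + (1 - a) * c := by continuity
  have hlim : Filter.Tendsto (fun a : ℝ => g x + (1 - a) * c)
      (nhdsWithin 0 (Set.Ioi 0)) (nhds (g x + c)) := by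
    have := hcont.tendsto 0
    simp only [sub_zero, one_mul] at this
    exact this.mono_left nhdsWithin_le_nhds
  refine le_of_tendsto hlim ?_
  filter_upwards [Ioo_mem_nhdsGT_of_mem (by norm_num : (0:ℝ) ∈ Set.Ico (0:ℝ) 1)] with a ha
  exact hkey a ha

lemma strong_combo {E : Type*} [NormedAddCommGroup E] [NormedSpace ℝ E]
    {Z : Set E} {lam : ℝ} (hlam : 0 ≤ lam) {n : ℕ} (f : Fin n → E → ℝ) (ψ : E → ℝ)
    (α : Fin n → ℝ) (hα : ∀ j, 0 ≤ α j) {c : ℝ} (hc : 0 ≤ c)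
    (hf : ∀ j, StrongConvexOn Z lam (f j)) (hψ : StrongConvexOn Z lam ψ)
    (s : Finset (Fin n)) :
    StrongConvexOn Z (lam * c) (fun x => ∑ j ∈ s, α j * f j x + c * ψ x) := by
  refine ⟨hψ.1, fun x hx y hy a b ha hb hab => ?_⟩
  have hφ : (0:ℝ) ≤ lam / 2 := by linarith
  have hsum : ∑ j ∈ s, α j * f j (a • x + b • y)
      ≤ a * ∑ j ∈ s, α j * f j x + b * ∑ j ∈ s, α j * f j y := by
    rw [Finset.mul_sum, Finset.mul_sum, ← Finset.sum_add_distrib]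
    refine Finset.sum_le_sum fun j _ => ?_
    have hconv : ConvexOn ℝ Z (f j) := (hf j).convexOn (fun r => by positivity)
    have := hconv.2 hx hy ha hb hab
    simp only [smul_eq_mul] at this
    nlinarith [hα j, this]
  have hpsi := hψ.2 hx hy ha hb hab
  simp only [smul_eq_mul] at hpsi ⊢
  nlinarith [mul_le_mul_of_nonneg_left hpsi hc]

/-- Weighted regret bound for Optimistic Follow-the-Leader (OFTL) with `λ`-strongly
convex losses `f t` and hints `ψ t`.  Here `z t` is the OFTL iterate (minimizing
`∑_{j < t} α j • f j + α t • ψ t` over `Z`) and `ztil t` plays the role of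
`z̃_{t+1}` (minimizing `∑_{j ≤ t} α j • f j` over `Z`). -/
theorem oftl_regret {E : Type*} [NormedAddCommGroup E] [NormedSpace ℝ E]
    {T : ℕ} (Z : Set E) (hZconv : Convex ℝ Z) (hZclosed : IsClosed Z)
    (hZne : Z.Nonempty)
    (f ψ : Fin T → E → ℝ) (α : Fin T → ℝ) (hα : ∀ t, 0 < α t)
    (lam : ℝ) (hlam : 0 < lam)
    (hf : ∀ t, StrongConvexOn Z lam (f t))
    (hψ : ∀ t, StrongConvexOn Z lam (ψ t))
    (z ztil : Fin T → E)
    (hz : ∀ t, z t ∈ Z ∧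
      IsMinOn (fun x => ∑ j ∈ Finset.univ.filter (· < t), α j * f j x + α t * ψ t x)
        Z (z t))
    (hztil : ∀ t, ztil t ∈ Z ∧
      IsMinOn (fun x => ∑ j ∈ Finset.univ.filter (· ≤ t), α j * f j x) Z (ztil t)) :
    ∀ zz ∈ Z,
      ∑ t, α t * f t (z t) - ∑ t, α t * f t zz ≤
        (∑ t, (α t * (f t (z t) - f t (ztil t)) - α t * (ψ t (z t) - ψ t (ztil t))))
          - (1 / 2) * lam * ∑ t, α t * ‖z t - ztil t‖ ^ 2 := by
  intro zz hzz
  classical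
  -- filter facts
  have hfilter_le : ∀ t : Fin T, Finset.univ.filter (· ≤ t)
      = insert t (Finset.univ.filter (· < t)) := by
    intro t; ext j
    simp [le_iff_lt_or_eq, or_comm]
  have hnotmem_lt : ∀ t : Fin T, t ∉ Finset.univ.filter (· < t) := by
    intro t; simp
  -- growth inequalities from strong convexity
  have growth : ∀ t : Fin T,
      (∑ j ∈ Finset.univ.filter (· < t), α j * f j (z t)) + α t * ψ t (z t)
        + lam * α t / 2 * ‖z t - ztil t‖ ^ 2
      ≤ (∑ j ∈ Finset.univ.filter (· < t), α j * f j (ztil t)) + α t * ψ t (ztil t) := by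
    intro t
    have hsc : StrongConvexOn Z (lam * α t)
        (fun x => ∑ j ∈ Finset.univ.filter (· < t), α j * f j x + α t * ψ t x) :=
      strong_combo hlam.le f (ψ t) α (fun j => (hα j).le) (hα t).le hf (hψ t) _
    have hgr := strong_growth (mul_nonneg hlam.le (hα t).le) hsc (hz t).1 (hztil t).1 (hz t).2
    rw [norm_sub_rev] at hgr
    calc (∑ j ∈ Finset.univ.filter (· < t), α j * f j (z t)) + α t * ψ t (z t)
          + lam * α t / 2 * ‖z t - ztil t‖ ^ 2
        = ((fun x => ∑ j ∈ Finset.univ.filter (· < t), α j * f j x + α t * ψ t x) (z t))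
          + (lam * α t) / 2 * ‖z t - ztil t‖ ^ 2 := by ring
      _ ≤ _ := hgr
  -- key "be the leader" induction
  have key : ∀ n : ℕ, n ≤ T → ∀ w ∈ Z,
      ∑ t ∈ Finset.univ.filter (fun t : Fin T => t.val < n),
        ((∑ j ∈ Finset.univ.filter (· ≤ t), α j * f j (ztil t))
          - ∑ j ∈ Finset.univ.filter (· < t), α j * f j (z t))
      ≤ ∑ j ∈ Finset.univ.filter (fun j : Fin T => j.val < n), α j * f j w := by
    intro n
    induction n with
    | zero => intro _ w hw; simp
    | succ n ih =>
      intro hn w hw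
      have hnT : n < T := hn
      set tn : Fin T := ⟨n, hnT⟩ with htn
      have hins : Finset.univ.filter (fun j : Fin T => j.val < n + 1)
          = insert tn (Finset.univ.filter (fun j : Fin T => j.val < n)) := by
        ext j
        simp [Nat.lt_succ_iff_lt_or_eq, Fin.ext_iff, htn, or_comm]
        omega
      have hnm : tn ∉ Finset.univ.filter (fun j : Fin T => j.val < n) := by simp [htn]
      have hltn : Finset.univ.filter (fun j : Fin T => j < tn)
          = Finset.univ.filter (fun j : Fin T => j.val < n) := by
        ext j; simp only [Finset.mem_filter, Finset.mem_univ, true_and, Fin.lt_def, htn, Fin.val_mk]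
      have hlen : Finset.univ.filter (fun j : Fin T => j ≤ tn)
          = Finset.univ.filter (fun j : Fin T => j.val < n + 1) := by
        ext j; simp only [Finset.mem_filter, Finset.mem_univ, true_and, Fin.le_def, htn, Fin.val_mk, Nat.lt_succ_iff]
      rw [hins, Finset.sum_insert hnm, Finset.sum_insert hnm]
      have h1 : ∑ t ∈ Finset.univ.filter (fun t : Fin T => t.val < n),
          ((∑ j ∈ Finset.univ.filter (· ≤ t), α j * f j (ztil t))
            - ∑ j ∈ Finset.univ.filter (· < t), α j * f j (z t))
          ≤ ∑ j ∈ Finset.univ.filter (fun j : Fin T => j.val < n), α j * f j (z tn) :=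
        ih (Nat.le_of_succ_le hn) (z tn) (hz tn).1
      have h2 : (∑ j ∈ Finset.univ.filter (· ≤ tn), α j * f j (ztil tn))
          ≤ ∑ j ∈ Finset.univ.filter (· ≤ tn), α j * f j w := (hztil tn).2 hw
      have h3 : (∑ j ∈ Finset.univ.filter (· ≤ tn), α j * f j w)
          = α tn * f tn w + ∑ j ∈ Finset.univ.filter (fun j : Fin T => j.val < n), α j * f j w := by
        rw [hfilter_le tn, Finset.sum_insert (hnotmem_lt tn), hltn]
      have h4 : (∑ j ∈ Finset.univ.filter (· < tn), α j * f j (z tn))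
          = ∑ j ∈ Finset.univ.filter (fun j : Fin T => j.val < n), α j * f j (z tn) := by
        rw [hltn]
      linarith
  have hunivT : Finset.univ.filter (fun t : Fin T => t.val < T) = Finset.univ := by
    ext t; simp [t.isLt]
  have hkeyT := key T le_rfl zz hzz
  rw [hunivT] at hkeyT
  -- rewrite F = G + α f in hkeyT
  have hkeyT' : ∑ t : Fin T,
      ((∑ j ∈ Finset.univ.filter (· < t), α j * f j (ztil t)) + α t * f t (ztil t)
        - ∑ j ∈ Finset.univ.filter (· < t), α j * f j (z t))
      ≤ ∑ t : Fin T, α t * f t zz := by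
    refine le_trans (le_of_eq (Finset.sum_congr rfl fun t _ => ?_)) hkeyT
    rw [hfilter_le t, Finset.sum_insert (hnotmem_lt t)]
    ring
  have hgrowthsum := Finset.sum_le_sum (fun t (_ : t ∈ Finset.univ) => growth t)
  have hhalf : (1 / 2) * lam * ∑ t : Fin T, α t * ‖z t - ztil t‖ ^ 2
      = ∑ t : Fin T, lam * α t / 2 * ‖z t - ztil t‖ ^ 2 := by
    rw [Finset.mul_sum]
    exact Finset.sum_congr rfl fun t _ => by ring
  simp only [Finset.sum_add_distrib, Finset.sum_sub_distrib, mul_sub] at hkeyT' hgrowthsum ⊢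
  linarith
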